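/- For a divisor structure where μ_e acts on μ_{en} by multiplication, the set NCP(e,1,n) of μ_e-invariant non-crossing partitions of μ_{en}, ordered by refinement, is a lattice. -/
import Mathlib


open Set

noncomputable section
open scoped Classical

/-- `u` is a set-theoretical partition of the set `x ⊆ ℂ`. -/
def IsPartitionOf (x : Set ℂ) (u : Set (Set ℂ)) : Prop :=
  (∀ a ∈ u, a.Nonempty ∧ a ⊆ x) ∧ ∀ z ∈ x, ∃! a, a ∈ u ∧ z ∈ a

/-- The refinement order on partitions. -/
def Refines (u v : Set (Set ℂ)) : Prop :=
  ∀ a ∈ u, ∃ b ∈ v, a ⊆ b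

/-- A partition is non-crossing if the convex hulls of two parts can only meet
when the parts are equal. -/
def IsNoncrossing (u : Set (Set ℂ)) : Prop :=
  ∀ a ∈ u, ∀ b ∈ u, (convexHull ℝ a ∩ convexHull ℝ b).Nonempty → a = b

/-- The set-theoretical meet of two partitions: parts are the nonempty
intersections of parts. -/
def meetParts (u v : Set (Set ℂ)) : Set (Set ℂ) :=
  {s | s.Nonempty ∧ ∃ a ∈ u, ∃ b ∈ v, s = a ∩ b}

/-- The set of `n`-th roots of unity. -/
def mu (n : ℕ) : Set ℂ := {z : ℂ | z ^ n = 1}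

/-- `ζ_n = exp(2iπ/n)`. -/
def zeta (n : ℕ) : ℂ := Complex.exp (2 * (Real.pi : ℂ) * Complex.I / (n : ℂ))

/-- Multiplication of a partition by a complex constant. -/
def rotate (c : ℂ) (u : Set (Set ℂ)) : Set (Set ℂ) :=
  (fun a => (fun z => c * z) '' a) '' u

/-- Invariance of a partition under multiplication by the group `μ_e`. -/
def MuInvariant (e : ℕ) (u : Set (Set ℂ)) : Prop :=
  ∀ ζ : ℂ, ζ ^ e = 1 → rotate ζ u = u

/-- `NCP(e,1,n)`: non-crossing partitions of `μ_{en}` fixed by the `μ_e`-action. -/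
def NCPmu (e n : ℕ) : Set (Set (Set ℂ)) :=
  {u | IsPartitionOf (mu (e * n)) u ∧ IsNoncrossing u ∧ MuInvariant e u}

/-- A partition is long if `0` lies in the convex hull of one of its parts. -/
def IsLong (u : Set (Set ℂ)) : Prop :=
  ∃ a ∈ u, (0 : ℂ) ∈ convexHull ℝ a

/-- The partition `u^♭` obtained by forgetting `0`. -/
def flatNCP (u : Set (Set ℂ)) : Set (Set ℂ) :=
  {s | s.Nonempty ∧ ∃ a ∈ u, s = a \ {0}}

/-- `NCP(e,e,n+1)`: non-crossing partitions of `μ_{en} ∪ {0}` such that the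
partition obtained by forgetting `0` is `μ_e`-invariant. -/
def NCPee (e n : ℕ) : Set (Set (Set ℂ)) :=
  {u | IsPartitionOf (insert 0 (mu (e * n))) u ∧ IsNoncrossing u ∧
    MuInvariant e (flatNCP u)}

/-- The trivial (one-block) partition of `μ_{en} ∪ {0}`. -/
def trivEE (e n : ℕ) : Set (Set ℂ) := {insert 0 (mu (e * n))}

/-- The discrete partition of `μ_n`. -/
def discMu (n : ℕ) : Set (Set ℂ) := {s | ∃ z ∈ mu n, s = {z}}

/-- `z'` is the counterclockwise successor of `z` on the boundary of the convex
set `b` (all remaining points of `b` are strictly on the left of the directed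
line from `z` to `z'`). -/
def ccwSucc (b : Set ℂ) (z z' : ℂ) : Prop :=
  z ∈ b ∧ z' ∈ b ∧ z ≠ z' ∧
    ∀ w ∈ b, w ≠ z → w ≠ z' →
      0 < ((z' - z).re * (w - z).im - (z' - z).im * (w - z).re)

/-- `σ` is the permutation associated with a partition `u` (of a set in convex
position), sending each element of a part to its counterclockwise successor in
that part. -/
def IsSuccMapOn (u : Set (Set ℂ)) (σ : ℂ → ℂ) : Prop :=
  ∀ b ∈ u, ∀ z ∈ b, (b = {z} → σ z = z) ∧ (b ≠ {z} → ccwSucc b z (σ z))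

/-- Restriction of a partition to the subset `X`. -/
def resTo (X : Set ℂ) (u : Set (Set ℂ)) : Set (Set ℂ) :=
  {s | s.Nonempty ∧ ∃ a ∈ u, s = a ∩ X}

/-- `w` is the (classical) Kreweras complement of `u` in `v`, for partitions of
a subset `X ⊆ ℂ` in convex position: it is characterized by
`σ_u σ_w = σ_v` (composition of motions). -/
def KrewRel (X : Set ℂ) (u v w : Set (Set ℂ)) : Prop :=
  Refines u v ∧ Refines w v ∧
    ∃ σu σv σw : ℂ → ℂ, IsSuccMapOn u σu ∧ IsSuccMapOn v σv ∧ IsSuccMapOn w σw ∧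
      ∀ z ∈ X, σw (σu z) = σv z

/-- An element of `NCP(e,e,n+1)` is symmetric if `{0}` is a part (short
symmetric) or its flat is long (long symmetric); otherwise it is asymmetric. -/
def SymmPart (u : Set (Set ℂ)) : Prop :=
  ({0} : Set ℂ) ∈ u ∨ IsLong (flatNCP u)

/-- The map `* : NCP(e,1,n) → NCP(e,e,n+1)`: add `{0}` as a singleton part if
`u` is short, add `0` to the long part if `u` is long. -/
def starNCP (u : Set (Set ℂ)) : Set (Set ℂ) :=
  if IsLong u then
    {s | ∃ a ∈ u, s = if (0 : ℂ) ∈ convexHull ℝ a then insert 0 a else a}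
  else insert {(0 : ℂ)} u

/-- The part of `v` containing `0`. -/
def asymPart (v : Set (Set ℂ)) : Set ℂ := ⋃₀ {a ∈ v | (0 : ℂ) ∈ a}

/-- The union `ã` of the `μ_e`-orbit of the part of `v` containing `0`
(with `0` removed). -/
def tildePart (e : ℕ) (v : Set (Set ℂ)) : Set ℂ :=
  ⋃ ζ ∈ {z : ℂ | z ^ e = 1}, (fun z => ζ * z) '' (asymPart v \ {0})

/-- The map `♯ : NCP(e,e,n+1) → NCP(e,1,n)`. -/
def sharpNCP (e : ℕ) (v : Set (Set ℂ)) : Set (Set ℂ) :=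
  if SymmPart v then flatNCP v
  else insert (tildePart e v) {b ∈ flatNCP v | ¬ b ⊆ tildePart e v}

/-- The minimal asymmetric partition `m_ζ`, with only non-singleton part `{0, ζ}`. -/
def mzeta (e n : ℕ) (ζ : ℂ) : Set (Set ℂ) :=
  insert {0, ζ} {s | ∃ z ∈ mu (e * n), z ≠ ζ ∧ s = {z}}

/-- The set `a_ζ = {0, ζ_{en}ζ, ζ_{en}²ζ, …, ζ_{en}ⁿζ}`. -/
def azeta (e n : ℕ) (ζ : ℂ) : Set ℂ :=
  insert 0 {z : ℂ | ∃ k : ℕ, 1 ≤ k ∧ k ≤ n ∧ z = zeta (e * n) ^ k * ζ}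

/-- The maximal asymmetric partition `M_ζ`, with asymmetric part `a_ζ` and
remaining parts `ζ' a_ζ ∖ {0}` for `ζ' ∈ μ_e ∖ {1}`. -/
def Mzeta (e n : ℕ) (ζ : ℂ) : Set (Set ℂ) :=
  insert (azeta e n ζ)
    {s | ∃ ζ' : ℂ, ζ' ^ e = 1 ∧ ζ' ≠ 1 ∧ s = (fun z => ζ' * z) '' (azeta e n ζ \ {0})}

/-- `w` is the complement `u\v` of `u` in `v`, in `NCP(e,e,n+1)`, following the
three cases of the definition: (A) both symmetric, computed through the flats
in `NCP(e,1,n)`; (B) `v` asymmetric, computed in some interval `[disc, M_ζ]`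
through restriction to `a_ζ`; (C) `u` asymmetric, computed through the
isomorphisms `ψ_ζ` and `φ_ζ` with the non-crossing partitions of `a_ζ`. -/
def IsComplEE (e n : ℕ) (u v w : Set (Set ℂ)) : Prop :=
  Refines u v ∧
    ((SymmPart u ∧ SymmPart v ∧
        ∃ k, KrewRel (mu (e * n)) (flatNCP u) (flatNCP v) k ∧ w = starNCP k) ∨
     (¬ SymmPart v ∧ ∃ ζ : ℂ, ζ ^ (e * n) = 1 ∧ Refines v (Mzeta e n ζ) ∧
        Refines w (Mzeta e n ζ) ∧
        KrewRel (azeta e n ζ) (resTo (azeta e n ζ) u) (resTo (azeta e n ζ) v)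
          (resTo (azeta e n ζ) w)) ∨
     (¬ SymmPart u ∧ ∃ ζ : ℂ, ζ ^ (e * n) = 1 ∧ Refines (mzeta e n ζ) u ∧
        Refines w (Mzeta e n ζ) ∧
        KrewRel (azeta e n ζ) (resTo (azeta e n ζ) u) (resTo (azeta e n ζ) v)
          (resTo (azeta e n ζ) w)))

/-- Height of an element of `NCP(e,e,n+1)` with `m` parts: `n - (m-1)/e` in the
short symmetric case, `n+1 - (m-1)/e` in the long symmetric case,
`n+1 - m/e` in the asymmetric case. -/
def htEE (e n : ℕ) (u : Set (Set ℂ)) : ℤ :=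
  if ({0} : Set ℂ) ∈ u then (n : ℤ) - ((u.ncard : ℤ) - 1) / (e : ℤ)
  else if IsLong (flatNCP u) then (n : ℤ) + 1 - ((u.ncard : ℤ) - 1) / (e : ℤ)
  else (n : ℤ) + 1 - (u.ncard : ℤ) / (e : ℤ)

/-- The height-one symmetric partition `u_{p,q}`, with non-singleton parts the
`e` rotates `ζ_e^i {ζ_{ne}^p, ζ_{ne}^q}`. -/
def upq (e n : ℕ) (p q : ℤ) : Set (Set ℂ) :=
  {s | ∃ ζ : ℂ, ζ ^ e = 1 ∧ s = {ζ * zeta (e * n) ^ p, ζ * zeta (e * n) ^ q}} ∪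
    {s | ∃ z ∈ insert (0 : ℂ) (mu (e * n)), s = {z} ∧
      ∀ ζ : ℂ, ζ ^ e = 1 → z ≠ ζ * zeta (e * n) ^ p ∧ z ≠ ζ * zeta (e * n) ^ q}

/-- The height-one asymmetric partition `u_p`, with unique non-singleton part
`{0, ζ_{en}^p}`. -/
def upt (e n : ℕ) (p : ℤ) : Set (Set ℂ) :=
  insert {0, zeta (e * n) ^ p}
    {s | ∃ z ∈ mu (e * n), z ≠ zeta (e * n) ^ p ∧ s = {z}}

/-- A weakly increasing chain of length `N` in a set `S` of partitions. -/
def IsChainOf (S : Set (Set (Set ℂ))) (N : ℕ) (c : Fin N → Set (Set ℂ)) : Prop :=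
  (∀ i, c i ∈ S) ∧ ∀ i j : Fin N, i ≤ j → Refines (c i) (c j)

lemma refines_refl (u : Set (Set ℂ)) : Refines u u := fun a ha => ⟨a, ha, subset_rfl⟩

lemma refines_trans {u v w : Set (Set ℂ)} (h1 : Refines u v) (h2 : Refines v w) :
    Refines u w := by
  intro a ha
  obtain ⟨b, hb, hab⟩ := h1 a ha
  obtain ⟨c, hc, hbc⟩ := h2 b hb
  exact ⟨c, hc, hab.trans hbc⟩

lemma meetParts_refines_left {u v : Set (Set ℂ)} : Refines (meetParts u v) u := by
  rintro s ⟨hs, a, ha, b, hb, rfl⟩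
  exact ⟨a, ha, Set.inter_subset_left⟩

lemma meetParts_refines_right {u v : Set (Set ℂ)} : Refines (meetParts u v) v := by
  rintro s ⟨hs, a, ha, b, hb, rfl⟩
  exact ⟨b, hb, Set.inter_subset_right⟩

lemma refines_meetParts {u v w : Set (Set ℂ)} (hw : ∀ a ∈ w, a.Nonempty)
    (h1 : Refines w u) (h2 : Refines w v) : Refines w (meetParts u v) := by
  intro a ha
  obtain ⟨b, hb, hab⟩ := h1 a ha
  obtain ⟨c, hc, hac⟩ := h2 a ha
  exact ⟨b ∩ c, ⟨(hw a ha).mono (Set.subset_inter hab hac), b, hb, c, hc, rfl⟩,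
    Set.subset_inter hab hac⟩

lemma meetParts_isPartitionOf {x : Set ℂ} {u v : Set (Set ℂ)}
    (hu : IsPartitionOf x u) (hv : IsPartitionOf x v) :
    IsPartitionOf x (meetParts u v) := by
  constructor
  · rintro s ⟨hs, a, ha, b, hb, rfl⟩
    exact ⟨hs, Set.inter_subset_left.trans (hu.1 a ha).2⟩
  · intro z hz
    obtain ⟨a, ⟨ha, hza⟩, hau⟩ := hu.2 z hz
    obtain ⟨b, ⟨hb, hzb⟩, hbv⟩ := hv.2 z hz
    refine ⟨a ∩ b, ⟨⟨⟨z, hza, hzb⟩, a, ha, b, hb, rfl⟩, hza, hzb⟩, ?_⟩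
    rintro s ⟨⟨hs, a', ha', b', hb', rfl⟩, hzs⟩
    rw [hau a' ⟨ha', hzs.1⟩, hbv b' ⟨hb', hzs.2⟩]

lemma meetParts_noncrossing {u v : Set (Set ℂ)}
    (hu : IsNoncrossing u) (hv : IsNoncrossing v) : IsNoncrossing (meetParts u v) := by
  rintro s ⟨hs, a, ha, b, hb, rfl⟩ t ⟨ht, a', ha', b', hb', rfl⟩ ⟨z, hz1, hz2⟩
  have h1 : a = a' := hu a ha a' ha'
    ⟨z, convexHull_mono Set.inter_subset_left hz1, convexHull_mono Set.inter_subset_left hz2⟩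
  have h2 : b = b' := hv b hb b' hb'
    ⟨z, convexHull_mono Set.inter_subset_right hz1,
      convexHull_mono Set.inter_subset_right hz2⟩
  rw [h1, h2]

lemma rotate_meetParts {ζ : ℂ} (hζ : ζ ≠ 0) (u v : Set (Set ℂ)) :
    rotate ζ (meetParts u v) = meetParts (rotate ζ u) (rotate ζ v) := by
  have hinj : Function.Injective (fun z : ℂ => ζ * z) := fun a b h =>
    mul_left_cancel₀ hζ h
  ext s
  constructor
  · rintro ⟨t, ⟨ht, a, ha, b, hb, rfl⟩, rfl⟩
    refine ⟨ht.image _, _, ⟨a, ha, rfl⟩, _, ⟨b, hb, rfl⟩, ?_⟩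
    simpa using Set.image_inter hinj
  · rintro ⟨hs, a', ⟨a, ha, rfl⟩, b', ⟨b, hb, rfl⟩, rfl⟩
    rw [← Set.image_inter hinj] at hs ⊢
    refine ⟨a ∩ b, ⟨?_, a, ha, b, hb, rfl⟩, rfl⟩
    obtain ⟨w, z, hz, rfl⟩ := hs
    exact ⟨z, hz⟩

lemma meetParts_muInvariant {e : ℕ} (he : 0 < e) {u v : Set (Set ℂ)}
    (hu : MuInvariant e u) (hv : MuInvariant e v) : MuInvariant e (meetParts u v) := by
  intro ζ hζ
  have hζ0 : ζ ≠ 0 := by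
    intro h; rw [h, zero_pow he.ne'] at hζ; exact zero_ne_one hζ
  rw [rotate_meetParts hζ0, hu ζ hζ, hv ζ hζ]

lemma meetParts_mem_NCPmu {e n : ℕ} (he : 0 < e) {u v : Set (Set ℂ)}
    (hu : u ∈ NCPmu e n) (hv : v ∈ NCPmu e n) : meetParts u v ∈ NCPmu e n :=
  ⟨meetParts_isPartitionOf hu.1 hv.1, meetParts_noncrossing hu.2.1 hv.2.1,
    meetParts_muInvariant he hu.2.2 hv.2.2⟩

lemma mu_finite {N : ℕ} (hN : 0 < N) : (mu N).Finite := by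
  apply Set.Finite.subset (Polynomial.nthRoots N (1 : ℂ)).toFinset.finite_toSet
  intro z hz
  rw [Finset.mem_coe, Multiset.mem_toFinset, Polynomial.mem_nthRoots hN]
  exact hz

lemma NCPmu_finite {e n : ℕ} (he : 0 < e) (hn : 0 < n) : (NCPmu e n).Finite := by
  apply Set.Finite.subset ((mu_finite (Nat.mul_pos he hn)).finite_subsets).finite_subsets
  intro u hu a ha
  exact (hu.1.1 a ha).2

lemma image_mul_mu {e n : ℕ} (he : 0 < e) {ζ : ℂ} (hζ : ζ ^ e = 1) :
    (fun z => ζ * z) '' mu (e * n) = mu (e * n) := by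
  have hζ0 : ζ ≠ 0 := by
    intro h; rw [h, zero_pow he.ne'] at hζ; exact zero_ne_one hζ
  have hζen : ζ ^ (e * n) = 1 := by rw [pow_mul, hζ, one_pow]
  ext w
  constructor
  · rintro ⟨z, hz, rfl⟩
    show (ζ * z) ^ (e * n) = 1
    rw [mul_pow, hζen, hz, one_mul]
  · intro hw
    refine ⟨ζ⁻¹ * w, ?_, by field_simp⟩
    show (ζ⁻¹ * w) ^ (e * n) = 1
    rw [mul_pow, inv_pow, hζen, hw, inv_one, one_mul]

lemma top_mem_NCPmu {e n : ℕ} (he : 0 < e) (hn : 0 < n) :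
    ({mu (e * n)} : Set (Set ℂ)) ∈ NCPmu e n := by
  refine ⟨⟨?_, ?_⟩, ?_, ?_⟩
  · rintro a rfl
    exact ⟨⟨1, one_pow _⟩, subset_rfl⟩
  · intro z hz
    exact ⟨mu (e * n), ⟨rfl, hz⟩, by rintro s ⟨rfl, -⟩; rfl⟩
  · rintro a rfl b rfl _; rfl
  · intro ζ hζ
    rw [rotate, Set.image_singleton, image_mul_mu he hζ]

lemma refines_top {e n : ℕ} {u : Set (Set ℂ)} (hu : u ∈ NCPmu e n) :
    Refines u {mu (e * n)} := fun a ha => ⟨mu (e * n), rfl, (hu.1.1 a ha).2⟩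

lemma exists_glb_finset (U : Set (Set (Set ℂ)))
    (hcl : ∀ a ∈ U, ∀ b ∈ U, meetParts a b ∈ U)
    (t : Finset (Set (Set ℂ))) (hsub : ↑t ⊆ U) (hne : t.Nonempty) :
    ∃ j ∈ U, ∀ w ∈ t, Refines j w := by
  classical
  induction t using Finset.induction_on with
  | empty => exact absurd hne (by simp)
  | @insert a t _ ih =>
    have haU : a ∈ U := hsub (Finset.mem_insert_self a t)
    rcases t.eq_empty_or_nonempty with rfl | htne
    · refine ⟨a, haU, ?_⟩
      intro w hw
      rw [Finset.mem_insert] at hw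
      rcases hw with rfl | hw
      · exact refines_refl _
      · simp at hw
    · obtain ⟨j, hjU, hj⟩ := ih (fun x hx => hsub (Finset.mem_insert_of_mem hx)) htne
      refine ⟨meetParts j a, hcl j hjU a haU, ?_⟩
      intro w hw
      rw [Finset.mem_insert] at hw
      rcases hw with rfl | hw
      · exact meetParts_refines_right
      · exact refines_trans meetParts_refines_left (hj w hw)
/-- `NCP(e,1,n)`, the set of `μ_e`-invariant non-crossing partitions of
`μ_{en}`, ordered by refinement, is a lattice: any two elements admit a
greatest lower bound and a least upper bound in it. -/
theorem stmt6 (e n : ℕ) (he : 0 < e) (hn : 0 < n) (u v : Set (Set ℂ))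
    (hu : u ∈ NCPmu e n) (hv : v ∈ NCPmu e n) :
    (∃ m ∈ NCPmu e n, Refines m u ∧ Refines m v ∧
      ∀ w ∈ NCPmu e n, Refines w u → Refines w v → Refines w m) ∧
    (∃ j ∈ NCPmu e n, Refines u j ∧ Refines v j ∧
      ∀ w ∈ NCPmu e n, Refines u w → Refines v w → Refines j w) := by
  constructor
  · refine ⟨meetParts u v, meetParts_mem_NCPmu he hu hv, meetParts_refines_left,
      meetParts_refines_right, ?_⟩
    intro w hw h1 h2
    exact refines_meetParts (fun a ha => (hw.1.1 a ha).1) h1 h2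
  · set U : Set (Set (Set ℂ)) :=
      {w | w ∈ NCPmu e n ∧ Refines u w ∧ Refines v w} with hU
    have hUfin : U.Finite := (NCPmu_finite he hn).subset (fun w hw => hw.1)
    have hUcl : ∀ a ∈ U, ∀ b ∈ U, meetParts a b ∈ U := by
      rintro a ⟨ha, hua, hva⟩ b ⟨hb, hub, hvb⟩
      exact ⟨meetParts_mem_NCPmu he ha hb,
        refines_meetParts (fun x hx => (hu.1.1 x hx).1) hua hub,
        refines_meetParts (fun x hx => (hv.1.1 x hx).1) hva hvb⟩
    have htop : ({mu (e * n)} : Set (Set ℂ)) ∈ U :=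
      ⟨top_mem_NCPmu he hn, refines_top hu, refines_top hv⟩
    have hne : hUfin.toFinset.Nonempty :=
      ⟨{mu (e * n)}, hUfin.mem_toFinset.2 htop⟩
    obtain ⟨j, hjU, hj⟩ := exists_glb_finset U hUcl hUfin.toFinset
      (fun x hx => hUfin.mem_toFinset.1 hx) hne
    refine ⟨j, hjU.1, hjU.2.1, hjU.2.2, ?_⟩
    intro w hw h1 h2
    exact hj w (hUfin.mem_toFinset.2 ⟨hw, h1, h2⟩)
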